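/- Let A, B be real n×n matrices with B invertible and B⁻¹A = −2EQE + P. For z ∈ ℍⁿ and y = y(z), the matrix of second holomorphic partial derivatives (holomorphic Hessian) of S at y equals 2iQ − i·diag(ε₁/(1+e^{−y₁}), …, εₙ/(1+e^{−yₙ})), and its determinant satisfies det Hess S(y) = iⁿ · det(B)⁻¹ · det(A·diag(z₁'',…,zₙ'') + B·diag(z₁,…,zₙ)⁻¹) · ∏_{k=1}^n z_k/(1−z_k). -/

import Mathlib

open Matrix Real

/-- The dilogarithm `Li₂(z) = -∫₀¹ Log(1 - z t) / t dt`. -/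
noncomputable def Li2 (z : ℂ) : ℂ :=
  -∫ t in (0:ℝ)..(1:ℝ), Complex.log (1 - z * (t : ℂ)) / (t : ℂ)

/-- The sign `ε_k`: `1` for the first `nP` indices, `-1` for the rest. -/
def epsR (nP n : ℕ) (k : Fin n) : ℝ := if (k : ℕ) < nP then 1 else -1

/-- The potential function
`S(y) = i yᵀQy + Σ (-ε_k) y_k w_k + i Σ_{k ≤ n₊} Li₂(-e^{y_k}) - i Σ_{k > n₊} Li₂(-e^{y_k})`. -/
noncomputable def potential (nP nN : ℕ) (Q : Matrix (Fin (nP + nN)) (Fin (nP + nN)) ℝ)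
    (w : Fin (nP + nN) → ℂ) (y : Fin (nP + nN) → ℂ) : ℂ :=
  Complex.I * (y ⬝ᵥ (Q.map Complex.ofReal).mulVec y)
    + ∑ k, -(epsR nP (nP + nN) k : ℂ) * y k * w k
    + Complex.I * ∑ k ∈ Finset.univ.filter (fun k : Fin (nP + nN) => (k : ℕ) < nP),
        Li2 (-Complex.exp (y k))
    - Complex.I * ∑ k ∈ Finset.univ.filter (fun k : Fin (nP + nN) => ¬ (k : ℕ) < nP),
        Li2 (-Complex.exp (y k))

open Complex Set Filter Metric MeasureTheory intervalIntegral Topology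

/-! The potential is a quadratic form plus a linear form plus the separable sum
`∑ₖ i εₖ Li₂(-e^{yₖ})`. Since `Li₂'(u) = -Log(1 - u)/u`, the first derivative of `Li₂(-e^v)` is
`-Log(1 + e^v)` and the second is `-1/(1 + e^{-v})`, which gives the Hessian. The derivative of
`Li₂` comes from differentiating under the integral sign: the `z`-derivative `-(1 - z t)⁻¹` of the
integrand is bounded on (compact neighbourhood of `z`) × `[0, 1]`, because `1 - z t` stays in the
slit plane, which is star-shaped about `1`.

At `y = y(z)` one has `e^{yₖ} = -zₖ` or `-1/zₖ`, so `εₖ/(1 + e^{-yₖ}) = max(εₖ, 0) + 1/(zₖ - 1)`.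
Writing `D` for this diagonal matrix, `B⁻¹A = -2EQE + P` gives
`B⁻¹A Δ_{z''} + Δ_z⁻¹ = E(2Q - D)E Δ_{(1-z)/z}`, and taking determinants (`det E² = 1`) gives
the formula. -/

lemma one_sub_mul_ofReal_mem_slitPlane {x : ℂ} (hx : 1 - x ∈ slitPlane) {t : ℝ}
    (ht : t ∈ Icc (0 : ℝ) 1) : 1 - x * t ∈ slitPlane := by
  have := starConvex_one_slitPlane.add_smul_mem (y := -x) (by rwa [← sub_eq_add_neg]) ht.1 ht.2
  rwa [real_smul, mul_neg, ← sub_eq_add_neg, mul_comm] at this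

lemma mul_integral_inv_one_sub_mul {z : ℂ} (hz : 1 - z ∈ slitPlane) :
    z * ∫ t in (0 : ℝ)..1, (1 - z * t)⁻¹ = -Complex.log (1 - z) := by
  rw [sub_eq_add_neg] at hz ⊢
  simp [log_eq_integral hz, real_smul, sub_eq_add_neg, mul_comm]

lemma exists_bound_inv_one_sub_mul {K : Set ℂ} (hK : IsCompact K)
    (hKs : ∀ x ∈ K, 1 - x ∈ slitPlane) :
    ∃ M, ∀ x ∈ K, ∀ t ∈ Icc (0 : ℝ) 1, ‖(1 - x * t)⁻¹‖ ≤ M := by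
  obtain ⟨M, hM⟩ := (hK.prod isCompact_Icc).exists_bound_of_continuousOn
    (f := fun p : ℂ × ℝ => (1 - p.1 * p.2)⁻¹) <| ContinuousOn.inv₀ (by fun_prop)
      fun p hp => slitPlane_ne_zero (one_sub_mul_ofReal_mem_slitPlane (hKs _ hp.1) hp.2)
  exact ⟨M, fun x hx t ht => hM (x, t) ⟨hx, ht⟩⟩

lemma norm_log_one_sub_mul_div_le {z : ℂ} (hz : 1 - z ∈ slitPlane) {M : ℝ}
    (hM : ∀ t ∈ Icc (0 : ℝ) 1, ‖(1 - z * t)⁻¹‖ ≤ M) {t : ℝ} (ht : t ∈ Ioc (0 : ℝ) 1) :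
    ‖Complex.log (1 - z * t) / t‖ ≤ ‖z‖ * M := by
  have hint : ‖∫ s in (0 : ℝ)..1, (1 - z * t * s)⁻¹‖ ≤ M := by
    have hbound : ∀ s ∈ uIoc (0 : ℝ) 1, ‖(1 - z * t * s)⁻¹‖ ≤ M := fun s hs => by
      rw [uIoc_of_le zero_le_one] at hs
      convert hM (s * t) ⟨mul_nonneg hs.1.le ht.1.le, mul_le_one₀ hs.2 ht.1.le ht.2⟩ using 4
      push_cast; ring
    simpa using norm_integral_le_of_norm_le_const hbound
  rw [← neg_neg (Complex.log _), ← mul_integral_inv_one_sub_mul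
    (one_sub_mul_ofReal_mem_slitPlane hz ⟨ht.1.le, ht.2⟩), norm_div, norm_neg, norm_mul,
    norm_mul, norm_real, Real.norm_of_nonneg ht.1.le, mul_div_right_comm,
    mul_div_cancel_right₀ _ ht.1.ne']
  gcongr

lemma hasDerivAt_log_one_sub_mul_div {x t : ℂ} (hx : 1 - x * t ∈ slitPlane) (ht : t ≠ 0) :
    HasDerivAt (fun x => Complex.log (1 - x * t) / t) (-(1 - x * t)⁻¹) x := by
  refine ((((hasDerivAt_id x).mul_const t).const_sub 1).clog hx |>.div_const t).congr_deriv ?_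
  simp only [id, one_mul]
  field_simp

theorem hasDerivAt_Li2 {z : ℂ} (hz : 1 - z ∈ slitPlane) (hz0 : z ≠ 0) :
    HasDerivAt Li2 (-Complex.log (1 - z) / z) z := by
  obtain ⟨r, hr, hball⟩ := nhds_basis_closedBall.mem_iff.1 <|
    (isOpen_slitPlane.preimage (continuous_const.sub continuous_id)).mem_nhds hz
  obtain ⟨M, hM⟩ := exists_bound_inv_one_sub_mul (isCompact_closedBall z r) fun x hx => hball hx
  have hIoc : ∀ t ∈ uIoc (0 : ℝ) 1, t ∈ Ioc (0 : ℝ) 1 := fun t ht => by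
    rwa [uIoc_of_le zero_le_one] at ht
  have hF_int : IntervalIntegrable (fun t : ℝ => Complex.log (1 - z * t) / t) volume 0 1 := by
    rw [intervalIntegrable_iff_integrableOn_Ioc_of_le zero_le_one]
    refine Measure.integrableOn_of_bounded (M := ‖z‖ * M) measure_Ioc_lt_top.ne
      (by fun_prop : Measurable _).aestronglyMeasurable ?_
    refine (ae_restrict_iff' measurableSet_Ioc).2 (ae_of_all _ fun t ht => ?_)
    exact norm_log_one_sub_mul_div_le hz (hM z (mem_closedBall_self hr.le)) ht
  have h := hasDerivAt_integral_of_dominated_loc_of_deriv_le (bound := fun _ => M)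
    (F' := fun x t => -(1 - x * (t : ℂ))⁻¹) (closedBall_mem_nhds z hr)
    (Eventually.of_forall fun x => (by fun_prop : Measurable _).aestronglyMeasurable) hF_int
    (by fun_prop : Measurable _).aestronglyMeasurable
    (ae_of_all _ fun t ht x hx => by
      simpa using hM x hx t (Ioc_subset_Icc_self (hIoc t ht)))
    intervalIntegrable_const
    (ae_of_all _ fun t ht x hx => hasDerivAt_log_one_sub_mul_div
      (one_sub_mul_ofReal_mem_slitPlane (hball hx) (Ioc_subset_Icc_self (hIoc t ht)))
      (ofReal_ne_zero.2 (hIoc t ht).1.ne'))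
  refine h.2.neg.congr_deriv ?_
  rw [intervalIntegral.integral_neg, neg_neg, eq_div_iff hz0, mul_comm,
    mul_integral_inv_one_sub_mul hz]

lemma hasDerivAt_Li2_neg_exp {v : ℂ} (hv : 1 + cexp v ∈ slitPlane) :
    HasDerivAt (fun u => Li2 (-cexp u)) (-Complex.log (1 + cexp v)) v := by
  have h := (hasDerivAt_Li2 (z := -cexp v) (by rwa [sub_neg_eq_add])
    (neg_ne_zero.2 (exp_ne_zero v))).comp v (hasDerivAt_exp v).neg
  refine h.congr_deriv ?_
  rw [sub_neg_eq_add]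
  field_simp [exp_ne_zero v]

lemma hasDerivAt_log_one_add_exp {v : ℂ} (hv : 1 + cexp v ∈ slitPlane) :
    HasDerivAt (fun u => Complex.log (1 + cexp u)) (1 + cexp (-v))⁻¹ v := by
  refine (((hasDerivAt_exp v).const_add 1).clog hv).congr_deriv ?_
  rw [Complex.exp_neg, ← inv_div, add_div, div_self (exp_ne_zero v), one_div, add_comm]

section Hessian

variable {𝕜 ι : Type*} [NontriviallyNormedField 𝕜] [Fintype ι]

open ContinuousLinearMap

lemma hasFDerivAt_mulVec_apply (N : Matrix ι ι 𝕜) (k : ι) (y : ι → 𝕜) :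
    HasFDerivAt (fun v => (N *ᵥ v) k) (∑ j, N k j • (proj j : (ι → 𝕜) →L[𝕜] 𝕜)) y :=
  HasFDerivAt.fun_sum fun j _ => (hasFDerivAt_apply j y).const_smul (N k j)

lemma HasDerivAt.hasFDerivAt_comp_apply {g : 𝕜 → 𝕜} {g' : 𝕜} {y : ι → 𝕜} {i : ι}
    (hg : HasDerivAt g g' (y i)) :
    HasFDerivAt (fun v => g (v i)) (g' • (proj i : (ι → 𝕜) →L[𝕜] 𝕜)) y :=
  hg.comp_hasFDerivAt y (hasFDerivAt_apply i y)

variable [DecidableEq ι]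

lemma fderiv_quadratic_add_sum_apply_single (M : Matrix ι ι 𝕜) (a : ι → 𝕜) (φ φ' : ι → 𝕜 → 𝕜)
    {y : ι → 𝕜} (hφ : ∀ i, HasDerivAt (φ i) (φ' i (y i)) (y i)) (k : ι) :
    fderiv 𝕜 (fun v => v ⬝ᵥ M *ᵥ v + a ⬝ᵥ v + ∑ i, φ i (v i)) y (Pi.single k 1)
      = ((M + Mᵀ) *ᵥ y) k + a k + φ' k (y k) := by
  have hq : HasFDerivAt (fun v => v ⬝ᵥ M *ᵥ v) _ y :=
    HasFDerivAt.fun_sum fun i _ => (hasFDerivAt_apply i y).mul (hasFDerivAt_mulVec_apply M i y)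
  have hl : HasFDerivAt (fun v : ι → 𝕜 => ∑ i, a i * v i)
      (∑ i, a i • (proj i : (ι → 𝕜) →L[𝕜] 𝕜)) y :=
    HasFDerivAt.fun_sum fun i _ => (hasFDerivAt_apply i y).const_smul (a i)
  have hs : HasFDerivAt (fun v => ∑ i, φ i (v i)) _ y :=
    HasFDerivAt.fun_sum fun i _ => (hφ i).hasFDerivAt_comp_apply
  have hf : HasFDerivAt (fun v => v ⬝ᵥ M *ᵥ v + a ⬝ᵥ v + ∑ i, φ i (v i)) _ y :=
    (hq.add hl).add hs
  rw [hf.fderiv]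
  simp [Pi.single_apply, Finset.sum_add_distrib, mulVec, dotProduct, mul_add, mul_comm, add_comm]

theorem fderiv_fderiv_quadratic_add_sum (M : Matrix ι ι 𝕜) (a : ι → 𝕜) (φ φ' : ι → 𝕜 → 𝕜)
    (φ'' : ι → 𝕜) {y : ι → 𝕜} (hφ : ∀ i, ∀ᶠ v in 𝓝 (y i), HasDerivAt (φ i) (φ' i v) v)
    (hφ' : ∀ i, HasDerivAt (φ' i) (φ'' i) (y i)) (j k : ι) :
    fderiv 𝕜 (fun y' => fderiv 𝕜 (fun v => v ⬝ᵥ M *ᵥ v + a ⬝ᵥ v + ∑ i, φ i (v i)) y'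
        (Pi.single k 1)) y (Pi.single j 1)
      = M j k + M k j + if j = k then φ'' k else 0 := by
  have hgrad : (fun y' => fderiv 𝕜 (fun v => v ⬝ᵥ M *ᵥ v + a ⬝ᵥ v + ∑ i, φ i (v i)) y'
      (Pi.single k 1)) =ᶠ[𝓝 y] fun y' => ((M + Mᵀ) *ᵥ y') k + a k + φ' k (y' k) := by
    have hev := eventually_all.2 fun i => (continuous_apply i).continuousAt.eventually (hφ i)
    exact hev.mono fun y' hy' => fderiv_quadratic_add_sum_apply_single M a φ φ' hy' k
  have hd : HasFDerivAt (fun y' => ((M + Mᵀ) *ᵥ y') k + a k + φ' k (y' k)) _ y :=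
    ((hasFDerivAt_mulVec_apply (M + Mᵀ) k y).add_const (a k)).add
      (hφ' k).hasFDerivAt_comp_apply
  rw [hgrad.fderiv_eq, hd.fderiv]
  simp [Pi.single_apply, add_comm, eq_comm]

end Hessian

lemma potential_eq_quadratic_add_sum (nP nN : ℕ) (Q : Matrix (Fin (nP + nN)) (Fin (nP + nN)) ℝ)
    (w : Fin (nP + nN) → ℂ) :
    potential nP nN Q w = fun v => v ⬝ᵥ (I • Q.map ofReal) *ᵥ v
      + (fun k => -(epsR nP (nP + nN) k : ℂ) * w k) ⬝ᵥ v
      + ∑ k, I * epsR nP (nP + nN) k * Li2 (-cexp (v k)) := by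
  funext v
  have hLi : I * ∑ k ∈ Finset.univ.filter (fun k : Fin (nP + nN) => (k : ℕ) < nP),
        Li2 (-cexp (v k))
      - I * ∑ k ∈ Finset.univ.filter (fun k : Fin (nP + nN) => ¬ (k : ℕ) < nP),
        Li2 (-cexp (v k))
      = ∑ k, I * epsR nP (nP + nN) k * Li2 (-cexp (v k)) := by
    rw [← Finset.sum_filter_add_sum_filter_not _ (fun k : Fin (nP + nN) => (k : ℕ) < nP)
      (fun k => I * epsR nP (nP + nN) k * Li2 (-cexp (v k))), Finset.mul_sum, Finset.mul_sum,
      sub_eq_add_neg, ← Finset.sum_neg_distrib]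
    congr 1 <;> refine Finset.sum_congr rfl fun k hk => ?_ <;>
      simp [epsR, (Finset.mem_filter.1 hk).2]
  rw [potential, add_sub_assoc, hLi, smul_mulVec, dotProduct_smul, smul_eq_mul]
  congr 2
  exact Finset.sum_congr rfl fun k _ => by ring

lemma hessian_potential (nP nN : ℕ) (Q : Matrix (Fin (nP + nN)) (Fin (nP + nN)) ℝ)
    (hQ : Q.IsSymm) (w y : Fin (nP + nN) → ℂ) (hy : ∀ k, 1 + cexp (y k) ∈ slitPlane) :
    (Matrix.of fun j k : Fin (nP + nN) =>
        fderiv ℂ (fun y' => fderiv ℂ (potential nP nN Q w) y' (Pi.single k 1)) y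
          (Pi.single j 1))
      = (2 * I) • Q.map ofReal
        - I • diagonal fun k => (epsR nP (nP + nN) k : ℂ) / (1 + cexp (-y k)) := by
  have hU : IsOpen {v : ℂ | 1 + cexp v ∈ slitPlane} :=
    isOpen_slitPlane.preimage (continuous_const.add Complex.continuous_exp)
  ext j k
  rw [of_apply, potential_eq_quadratic_add_sum, fderiv_fderiv_quadratic_add_sum _ _ _
    (fun k v => I * epsR nP (nP + nN) k * -Complex.log (1 + cexp v))
    (fun k => I * epsR nP (nP + nN) k * -(1 + cexp (-y k))⁻¹)
    (fun i => eventually_of_mem (hU.mem_nhds (hy i))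
      fun v hv => (hasDerivAt_Li2_neg_exp hv).const_mul _)
    fun i => (hasDerivAt_log_one_add_exp (hy i)).neg.const_mul _]
  rcases eq_or_ne j k with rfl | hjk
  · simp only [Matrix.sub_apply, Matrix.smul_apply, map_apply, diagonal_apply_eq, if_true,
      smul_eq_mul]
    ring
  · simp only [Matrix.sub_apply, Matrix.smul_apply, map_apply, diagonal_apply_ne _ hjk,
      if_neg hjk, hQ.apply j k, smul_eq_mul]
    ring

theorem det_two_smul_sub_diagonal {ι K : Type*} [Fintype ι] [DecidableEq ι] [Field K]
    (A B Q : Matrix ι ι K) (e p z : ι → K) (he : ∀ k, e k * e k = 1) (hB : B.det ≠ 0)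
    (hz0 : ∀ k, z k ≠ 0) (hz1 : ∀ k, z k ≠ 1)
    (hA : A = B * ((-2 : K) • (diagonal e * Q * diagonal e) + diagonal p)) :
    ((2 : K) • Q - diagonal fun k => p k + (z k - 1)⁻¹).det
      = B.det⁻¹ * (A * diagonal (fun k => (z k - 1) / z k) + B * (diagonal z)⁻¹).det
        * ∏ k, z k / (1 - z k) := by
  have hinv : (diagonal z)⁻¹ = diagonal fun k => (z k)⁻¹ :=
    inv_eq_right_inv (by simp [diagonal_mul_diagonal, hz0])
  have hfactor : (-2 : K) • (diagonal e * Q * diagonal e) * diagonal (fun k => (z k - 1) / z k)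
        + diagonal p * diagonal (fun k => (z k - 1) / z k) + diagonal (fun k => (z k)⁻¹)
      = diagonal e * ((2 : K) • Q - diagonal fun k => p k + (z k - 1)⁻¹) * diagonal e
        * diagonal fun k => (1 - z k) / z k := by
    ext i j
    have hz0' := hz0 j
    have hz1' : z j - 1 ≠ 0 := sub_ne_zero.2 (hz1 j)
    rcases eq_or_ne i j with rfl | hij
    · simp only [Matrix.add_apply, Matrix.sub_apply, Matrix.smul_apply, mul_diagonal,
        diagonal_mul, diagonal_apply_eq, smul_eq_mul]
      field_simp
      linear_combination -(z i - 1) * ((z i - 1) * p i + 1) * he i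
    · simp only [Matrix.add_apply, Matrix.sub_apply, Matrix.smul_apply, mul_diagonal,
        diagonal_mul, diagonal_apply_ne _ hij, smul_eq_mul]
      ring
  have hee : (∏ k, e k) * ∏ k, e k = 1 := by
    rw [← Finset.prod_mul_distrib]; simp [he]
  have hzz : (∏ k, (1 - z k) / z k) * ∏ k, z k / (1 - z k) = 1 := by
    rw [← Finset.prod_mul_distrib]
    refine Finset.prod_eq_one fun k _ => ?_
    have := sub_ne_zero.2 (hz1 k).symm
    field_simp [hz0 k]
  rw [hA, hinv, Matrix.mul_assoc, ← Matrix.mul_add, Matrix.add_mul, hfactor]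
  simp only [det_mul, det_diagonal]
  rw [inv_mul_cancel_left₀ hB]
  set N := ((2 : K) • Q - diagonal fun k => p k + (z k - 1)⁻¹).det
  linear_combination (-N * (∏ k, (1 - z k) / z k) * ∏ k, z k / (1 - z k)) * hee - N * hzz

lemma map_ofReal_eq_mul_of_inv_mul_eq {ι : Type*} [Fintype ι] [DecidableEq ι]
    {A B Q : Matrix ι ι ℝ} {e p : ι → ℝ} (hB : IsUnit B.det)
    (hBA : B⁻¹ * A = (-2 : ℝ) • (diagonal e * Q * diagonal e) + diagonal p) :
    A.map ofReal = B.map ofReal * ((-2 : ℂ) • (diagonal (fun k => (e k : ℂ)) * Q.map ofReal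
      * diagonal fun k => (e k : ℂ)) + diagonal fun k => (p k : ℂ)) := by
  conv_lhs => rw [← mul_nonsing_inv_cancel_left B A hB, hBA]
  change (B * _).map ofRealHom = _
  rw [Matrix.map_mul]
  congr 1
  ext i j
  by_cases hij : i = j <;> simp [mul_diagonal, diagonal_mul, hij]

lemma epsR_mul_self {nP n : ℕ} (k : Fin n) : epsR nP n k * epsR nP n k = 1 := by
  unfold epsR
  split_ifs <;> norm_num

lemma exp_epsR_mul {nP n : ℕ} (k : Fin n) (u : ℂ) :
    cexp (epsR nP n k * u) = if (k : ℕ) < nP then cexp u else (cexp u)⁻¹ := by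
  unfold epsR
  split_ifs <;> simp [Complex.exp_neg]

lemma exp_log_sub_I_mul_pi {z : ℂ} (hz : z ≠ 0) : cexp (Complex.log z - I * π) = -z := by
  rw [Complex.exp_sub, exp_log hz, mul_comm, exp_pi_mul_I, div_neg, div_one]

lemma one_add_exp_epsR_mul_mem_slitPlane {nP n : ℕ} (k : Fin n) {z : ℂ} (hz : z.im ≠ 0) :
    1 + cexp (epsR nP n k * (Complex.log z - I * π)) ∈ slitPlane := by
  have hz0 : z ≠ 0 := fun h => hz (by simp [h])
  refine mem_slitPlane_iff.2 (Or.inr ?_)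
  rw [exp_epsR_mul, exp_log_sub_I_mul_pi hz0]
  split_ifs <;> simp [Complex.inv_im, hz, hz0]

lemma epsR_div_one_add_exp_neg_epsR_mul {nP n : ℕ} (k : Fin n) {z : ℂ} (hz0 : z ≠ 0)
    (hz1 : z ≠ 1) :
    (epsR nP n k : ℂ) / (1 + cexp (-(epsR nP n k * (Complex.log z - I * π))))
      = (max (epsR nP n k) 0 : ℝ) + (z - 1)⁻¹ := by
  have hz1' : z - 1 ≠ 0 := sub_ne_zero.2 hz1
  have hz1'' : 1 - z ≠ 0 := sub_ne_zero.2 hz1.symm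
  rw [Complex.exp_neg, exp_epsR_mul, exp_log_sub_I_mul_pi hz0]
  unfold epsR
  split_ifs
  · rw [inv_neg, ← sub_eq_add_neg, max_eq_left zero_le_one, ofReal_one]
    field_simp
    ring
  · rw [inv_inv, ← sub_eq_add_neg, max_eq_right (by norm_num), ofReal_zero, zero_add, ofReal_neg,
      ofReal_one]
    field_simp
    ring

theorem stmt_6_general (nP nN : ℕ)
    (Q A B : Matrix (Fin (nP + nN)) (Fin (nP + nN)) ℝ) (hQ : Q.IsSymm)
    (hB : IsUnit B.det)
    (hBA : B⁻¹ * A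
      = (-2 : ℝ) • (Matrix.diagonal (epsR nP (nP + nN)) * Q *
          Matrix.diagonal (epsR nP (nP + nN)))
        + Matrix.diagonal (fun k => max (epsR nP (nP + nN) k) 0))
    (w : Fin (nP + nN) → ℂ)
    (z : Fin (nP + nN) → ℂ) (hz : ∀ k, 0 < (z k).im)
    (y : Fin (nP + nN) → ℂ)
    (hy : ∀ k, y k = (epsR nP (nP + nN) k : ℂ) * (Complex.log (z k) - Complex.I * (π : ℂ))) :
    (Matrix.of fun j k : Fin (nP + nN) =>
        fderiv ℂ (fun y' => fderiv ℂ (potential nP nN Q w) y' (Pi.single k 1)) y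
          (Pi.single j 1))
      = (2 * Complex.I) • (Q.map Complex.ofReal)
        - Complex.I • Matrix.diagonal
            (fun k => (epsR nP (nP + nN) k : ℂ) / (1 + Complex.exp (-(y k)))) ∧
    (Matrix.of fun j k : Fin (nP + nN) =>
        fderiv ℂ (fun y' => fderiv ℂ (potential nP nN Q w) y' (Pi.single k 1)) y
          (Pi.single j 1)).det
      = Complex.I ^ (nP + nN) * ((B.det : ℂ))⁻¹
        * ((A.map Complex.ofReal) * Matrix.diagonal (fun k => (z k - 1) / z k)
            + (B.map Complex.ofReal) * (Matrix.diagonal z)⁻¹).det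
        * ∏ k, z k / (1 - z k) := by
  have hz0 (k) : z k ≠ 0 := fun h => (hz k).ne' (by simp [h])
  have hz1 (k) : z k ≠ 1 := fun h => (hz k).ne' (by simp [h])
  have hHess := hessian_potential nP nN Q hQ w y fun k => by
    rw [hy k]; exact one_add_exp_epsR_mul_mem_slitPlane k (hz k).ne'
  refine ⟨hHess, ?_⟩
  have hd : (fun k => (epsR nP (nP + nN) k : ℂ) / (1 + cexp (-y k)))
      = fun k => ((max (epsR nP (nP + nN) k) 0 : ℝ) : ℂ) + (z k - 1)⁻¹ :=
    funext fun k => by rw [hy k]; exact epsR_div_one_add_exp_neg_epsR_mul k (hz0 k) (hz1 k)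
  have hdetB : (B.map ofReal).det = B.det := (RingHom.map_det ofRealHom B).symm
  rw [hHess, hd, mul_comm 2 I, mul_smul, ← smul_sub, det_smul, Fintype.card_fin,
    det_two_smul_sub_diagonal _ _ _ _ _ z (fun k => by exact_mod_cast epsR_mul_self k)
      (hdetB ▸ ofReal_ne_zero.2 hB.ne_zero) hz0 hz1 (map_ofReal_eq_mul_of_inv_mul_eq hB hBA),
    hdetB]
  ring

/-- Proposition 3.4 (Hesstotor): the holomorphic Hessian of the potential
function at `y(z)` is `2iQ - i diag(ε_k/(1+e^{-y_k}))`, and its determinant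
equals `iⁿ det(B)⁻¹ det(A Δ_{z''} + B Δ_z⁻¹) ∏ z_k/(1-z_k)`. -/
theorem stmt_6 (nP nN : ℕ) (hn : 1 ≤ nP + nN)
    (Q A B : Matrix (Fin (nP + nN)) (Fin (nP + nN)) ℝ) (hQ : Q.IsSymm)
    (hB : IsUnit B.det)
    (hBA : B⁻¹ * A
      = (-2 : ℝ) • (Matrix.diagonal (epsR nP (nP + nN)) * Q *
          Matrix.diagonal (epsR nP (nP + nN)))
        + Matrix.diagonal (fun k => max (epsR nP (nP + nN) k) 0))
    (w : Fin (nP + nN) → ℂ)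
    (z : Fin (nP + nN) → ℂ) (hz : ∀ k, 0 < (z k).im)
    (y : Fin (nP + nN) → ℂ)
    (hy : ∀ k, y k = (epsR nP (nP + nN) k : ℂ) * (Complex.log (z k) - Complex.I * (π : ℂ))) :
    (Matrix.of fun j k : Fin (nP + nN) =>
        fderiv ℂ (fun y' => fderiv ℂ (potential nP nN Q w) y' (Pi.single k 1)) y
          (Pi.single j 1))
      = (2 * Complex.I) • (Q.map Complex.ofReal)
        - Complex.I • Matrix.diagonal
            (fun k => (epsR nP (nP + nN) k : ℂ) / (1 + Complex.exp (-(y k)))) ∧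
    (Matrix.of fun j k : Fin (nP + nN) =>
        fderiv ℂ (fun y' => fderiv ℂ (potential nP nN Q w) y' (Pi.single k 1)) y
          (Pi.single j 1)).det
      = Complex.I ^ (nP + nN) * ((B.det : ℂ))⁻¹
        * ((A.map Complex.ofReal) * Matrix.diagonal (fun k => (z k - 1) / z k)
            + (B.map Complex.ofReal) * (Matrix.diagonal z)⁻¹).det
        * ∏ k, z k / (1 - z k) :=
  stmt_6_general nP nN Q A B hQ hB hBA w z hz y hy
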